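/- There exists a constant C > 0 (depending only on n and the norm ‖·‖) such that for every real T ≥ 1, | Σ_{q ∈ ℤⁿ, 1 ≤ ‖q‖ < T} ‖q‖^{-n} − ω_n·log T | ≤ C. -/

import Mathlib

open MeasureTheory Filter Real Set
open scoped ENNReal Pointwise


section aux
variable {n : ℕ} {nrm : (Fin n → ℝ) → ℝ}
  (hnrm0 : ∀ x, nrm x = 0 ↔ x = 0)
  (hnrm_smul : ∀ (c : ℝ) x, nrm (c • x) = |c| * nrm x)
  (hnrm_add : ∀ x y, nrm (x + y) ≤ nrm x + nrm y)

include hnrm_smul in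
lemma nrm_zero' : nrm 0 = 0 := by
  have := hnrm_smul 0 0; simpa using this

include hnrm_smul in
lemma nrm_neg' (x : Fin n → ℝ) : nrm (-x) = nrm x := by
  have := hnrm_smul (-1) x; simpa using this

include hnrm_smul hnrm_add in
lemma nrm_nonneg' (x : Fin n → ℝ) : 0 ≤ nrm x := by
  have h := hnrm_add x (-x)
  rw [add_neg_cancel, nrm_zero' hnrm_smul, nrm_neg' hnrm_smul] at h
  linarith

include hnrm_add in
lemma nrm_sum' {ι : Type*} (s : Finset ι) (f : ι → (Fin n → ℝ)) (h0 : nrm 0 = 0) :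
    nrm (∑ i ∈ s, f i) ≤ ∑ i ∈ s, nrm (f i) := by
  classical
  induction s using Finset.induction with
  | empty => simp [h0]
  | insert a s hx ih =>
      rw [Finset.sum_insert hx, Finset.sum_insert hx]
      exact (hnrm_add _ _).trans (by linarith)

include hnrm_smul hnrm_add in
lemma nrm_le_K : ∃ K : ℝ, 0 < K ∧ ∀ x, nrm x ≤ K * ‖x‖ := by
  classical
  refine ⟨(∑ i, nrm (Pi.single i (1:ℝ) : Fin n → ℝ)) + 1, ?_, ?_⟩
  · have : 0 ≤ ∑ i, nrm (Pi.single i (1:ℝ) : Fin n → ℝ) :=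
      Finset.sum_nonneg fun i _ => nrm_nonneg' hnrm_smul hnrm_add _
    linarith
  · intro x
    have hx : x = ∑ i, x i • (Pi.single i (1:ℝ) : Fin n → ℝ) := by
      have := pi_eq_sum_univ x
      convert this using 2 with i
      ext j
      simp [Pi.single_apply, eq_comm]
    have hnn : (0:ℝ) ≤ ‖x‖ := norm_nonneg x
    calc nrm x ≤ ∑ i, nrm (x i • (Pi.single i (1:ℝ) : Fin n → ℝ)) := by
          conv_lhs => rw [hx]
          exact nrm_sum' hnrm_add _ _ (nrm_zero' hnrm_smul)
      _ ≤ ∑ i, ‖x‖ * nrm (Pi.single i (1:ℝ) : Fin n → ℝ) := by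
          refine Finset.sum_le_sum fun i _ => ?_
          rw [hnrm_smul]
          refine mul_le_mul_of_nonneg_right ?_ (nrm_nonneg' hnrm_smul hnrm_add _)
          simpa using norm_le_pi_norm x i
      _ = (∑ i, nrm (Pi.single i (1:ℝ) : Fin n → ℝ)) * ‖x‖ := by rw [Finset.sum_mul]; exact Finset.sum_congr rfl fun i _ => mul_comm _ _
      _ ≤ _ := by nlinarith

include hnrm_smul hnrm_add in
lemma nrm_lipschitz {K : ℝ} (hK : ∀ x, nrm x ≤ K * ‖x‖) :
    Continuous nrm := by
  have key : ∀ x y : Fin n → ℝ, |nrm x - nrm y| ≤ K * ‖x - y‖ := by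
    intro x y
    have h1 : nrm x ≤ nrm y + nrm (x - y) := by
      have := hnrm_add y (x - y); simpa using this
    have h2 : nrm y ≤ nrm x + nrm (x - y) := by
      have := hnrm_add x (y - x)
      have hne : nrm (y - x) = nrm (x - y) := by
        rw [← nrm_neg' hnrm_smul (y - x)]; congr 1; abel
      rw [hne] at this; simpa using this
    have := hK (x - y)
    rw [abs_sub_le_iff]; constructor <;> linarith
  rw [Metric.continuous_iff]
  intro x ε hε
  rcases le_or_gt K 0 with hK0 | hK0
  · refine ⟨1, one_pos, fun y hy => ?_⟩
    have := key y x
    have : |nrm y - nrm x| ≤ 0 := this.trans (mul_nonpos_of_nonpos_of_nonneg hK0 (norm_nonneg _))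
    rw [Real.dist_eq]
    calc |nrm y - nrm x| ≤ 0 := this
      _ < ε := hε
  · refine ⟨ε / K, by positivity, fun y hy => ?_⟩
    rw [Real.dist_eq]
    calc |nrm y - nrm x| ≤ K * ‖y - x‖ := key y x
      _ < K * (ε / K) := by
          refine mul_lt_mul_of_pos_left ?_ hK0
          rwa [← dist_eq_norm]
      _ = ε := by field_simp

end aux

section aux2
variable {n : ℕ} {nrm : (Fin n → ℝ) → ℝ}

lemma nrm_ge_m (hn : 1 ≤ n) (hnrm0 : ∀ x, nrm x = 0 ↔ x = 0)
    (hnrm_smul : ∀ (c : ℝ) x, nrm (c • x) = |c| * nrm x)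
    (hnn : ∀ x, 0 ≤ nrm x)
    (hcont : Continuous nrm) :
    ∃ m : ℝ, 0 < m ∧ ∀ x, m * ‖x‖ ≤ nrm x := by
  haveI : Nonempty (Fin n) := ⟨⟨0, hn⟩⟩
  have hsc : IsCompact (Metric.sphere (0 : Fin n → ℝ) 1) := isCompact_sphere 0 1
  have hsn : (Metric.sphere (0 : Fin n → ℝ) 1).Nonempty :=
    NormedSpace.sphere_nonempty.mpr zero_le_one
  obtain ⟨z, hz, hmin⟩ := hsc.exists_isMinOn hsn hcont.continuousOn
  have hz1 : ‖z‖ = 1 := by simpa using hz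
  have hzne : z ≠ 0 := by intro h; rw [h] at hz1; simp at hz1
  refine ⟨nrm z, ?_, ?_⟩
  · rcases lt_or_eq_of_le (hnn z) with h | h
    · exact h
    · exact absurd (((hnrm0 z).mp h.symm)) hzne
  · intro x
    rcases eq_or_ne x 0 with rfl | hx
    · simp [(hnrm0 0).mpr rfl]
    · have hnx : (0:ℝ) < ‖x‖ := norm_pos_iff.mpr hx
      set u : Fin n → ℝ := ‖x‖⁻¹ • x with hu
      have hu1 : u ∈ Metric.sphere (0 : Fin n → ℝ) 1 := by
        simp [hu, norm_smul, abs_of_pos (inv_pos.mpr hnx), inv_mul_cancel₀ hnx.ne']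
      have := hmin hu1
      have hx' : x = ‖x‖ • u := by
        rw [hu, smul_smul, mul_inv_cancel₀ hnx.ne', one_smul]
      have key : nrm x = ‖x‖ * nrm u := by
        have h5 : nrm (‖x‖ • u) = |‖x‖| * nrm u := hnrm_smul _ _
        rw [← hx'] at h5
        rw [h5, abs_of_pos hnx]
      calc nrm z * ‖x‖ ≤ nrm u * ‖x‖ := mul_le_mul_of_nonneg_right this hnx.le
        _ = nrm x := by rw [key]; ring

lemma lattice_finite {m : ℝ} (hm : 0 < m)
    (hmle : ∀ x, m * ‖x‖ ≤ nrm x) (r : ℝ) :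
    {q : Fin n → ℤ | nrm (fun j => (q j : ℝ)) ≤ r}.Finite := by
  classical
  set M : ℤ := ⌈r / m⌉ with hM
  have : {q : Fin n → ℤ | nrm (fun j => (q j : ℝ)) ≤ r} ⊆
      Set.pi Set.univ (fun _ : Fin n => Set.Icc (-M) M) := by
    intro q hq
    intro i _
    have h1 : m * ‖(fun j => (q j : ℝ))‖ ≤ r := le_trans (hmle _) hq
    have h2 : ‖(fun j => (q j : ℝ))‖ ≤ r / m := by
      rw [le_div_iff₀ hm]; linarith
    have h3 : |(q i : ℝ)| ≤ r / m := by
      calc |(q i : ℝ)| = ‖(fun j => (q j : ℝ)) i‖ := by simp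
        _ ≤ ‖(fun j => (q j : ℝ))‖ := norm_le_pi_norm (fun j => (q j : ℝ)) i
        _ ≤ r / m := h2
    have h4 : (|q i| : ℝ) ≤ (M : ℝ) := by
      push_cast
      calc (|(q i : ℝ)|) ≤ r / m := h3
        _ ≤ (M : ℝ) := Int.le_ceil _
    have h5 : |q i| ≤ M := by exact_mod_cast h4
    simp only [Set.mem_Icc]
    exact abs_le.mp h5
  exact Set.Finite.subset (Set.Finite.pi fun _ => Set.finite_Icc _ _) this

end aux2

section cubes
variable {n : ℕ}

def latticeCube (q : Fin n → ℤ) : Set (Fin n → ℝ) :=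
  Set.univ.pi fun i => Set.Ico (q i : ℝ) ((q i : ℝ) + 1)

lemma latticeCube_measurable (q : Fin n → ℤ) : MeasurableSet (latticeCube q) :=
  MeasurableSet.univ_pi fun _ => measurableSet_Ico

lemma latticeCube_volume (q : Fin n → ℤ) : volume (latticeCube q) = 1 := by
  rw [latticeCube, volume_pi_pi]
  simp [Real.volume_Ico]

lemma mem_latticeCube_floor (y : Fin n → ℝ) :
    y ∈ latticeCube (fun i => ⌊y i⌋) := by
  intro i _
  exact ⟨Int.floor_le _, Int.lt_floor_add_one _⟩

lemma latticeCube_norm_le {q : Fin n → ℤ} {x : Fin n → ℝ} (hx : x ∈ latticeCube q) :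
    ‖x - (fun j => (q j : ℝ))‖ ≤ 1 := by
  refine (pi_norm_le_iff_of_nonneg zero_le_one).mpr fun i => ?_
  have h := hx i (Set.mem_univ i)
  rw [Set.mem_Ico] at h
  have : |x i - (q i : ℝ)| ≤ 1 := by
    rw [abs_le]; constructor <;> [linarith [h.1]; linarith [h.2]]
  simpa using this

lemma latticeCube_disjoint {q q' : Fin n → ℤ} (h : q ≠ q') :
    Disjoint (latticeCube q) (latticeCube q') := by
  rw [Set.disjoint_left]
  intro x hx hx'
  apply h
  funext i
  have h1 := hx i (Set.mem_univ i)
  have h2 := hx' i (Set.mem_univ i)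
  rw [Set.mem_Ico] at h1 h2
  have e1 : ⌊x i⌋ = q i := Int.floor_eq_iff.mpr ⟨h1.1, by exact_mod_cast h1.2⟩
  have e2 : ⌊x i⌋ = q' i := Int.floor_eq_iff.mpr ⟨h2.1, by exact_mod_cast h2.2⟩
  rw [← e1, e2]

variable {nrm : (Fin n → ℝ) → ℝ}

lemma count_sandwich
    (hnrm_smul : ∀ (c : ℝ) x, nrm (c • x) = |c| * nrm x)
    (hnrm_add : ∀ x y, nrm (x + y) ≤ nrm x + nrm y)
    {K : ℝ} (hK : 0 ≤ K) (hKle : ∀ x, nrm x ≤ K * ‖x‖)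
    (hfin : ∀ r : ℝ, {q : Fin n → ℤ | nrm (fun j => (q j : ℝ)) ≤ r}.Finite)
    (r : ℝ) :
    volume {z : Fin n → ℝ | nrm z ≤ r - K} ≤ (((hfin r).toFinset.card : ℕ) : ℝ≥0∞) ∧
    (((hfin r).toFinset.card : ℕ) : ℝ≥0∞) ≤ volume {z : Fin n → ℝ | nrm z ≤ r + K} := by
  classical
  set F := (hfin r).toFinset with hF
  have hvol : volume (⋃ q ∈ F, latticeCube q) = (F.card : ℝ≥0∞) := by
    rw [measure_biUnion_finset ?_ (fun q _ => latticeCube_measurable q)]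
    · simp [latticeCube_volume]
    · intro q hq q' hq' hne
      exact latticeCube_disjoint hne
  constructor
  · rw [← hvol]
    apply measure_mono
    intro y hy
    simp only [Set.mem_setOf_eq] at hy
    refine Set.mem_biUnion ((Set.Finite.mem_toFinset _).mpr ?_) (mem_latticeCube_floor y)
    simp only [Set.mem_setOf_eq]
    have hsub : (fun j => ((⌊y j⌋ : ℤ) : ℝ)) = y + ((fun j => (⌊y j⌋ : ℝ)) - y) := by
      funext j; simp
    calc nrm (fun j => ((⌊y j⌋ : ℤ) : ℝ))
        ≤ nrm y + nrm ((fun j => (⌊y j⌋ : ℝ)) - y) := by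
          have h := hnrm_add y ((fun j => (⌊y j⌋ : ℝ)) - y)
          rw [← hsub] at h; exact h
      _ ≤ (r - K) + K * ‖(fun j => (⌊y j⌋ : ℝ)) - y‖ := add_le_add hy (hKle _)
      _ ≤ (r - K) + K * 1 := by
          gcongr
          rw [← norm_neg]
          have heq : -((fun j => (⌊y j⌋ : ℝ)) - y) = y - fun j => (⌊y j⌋ : ℝ) := by abel
          rw [heq]
          exact latticeCube_norm_le (mem_latticeCube_floor y)
      _ = r := by ring
  · rw [← hvol]
    apply measure_mono
    intro x hx
    rw [Set.mem_iUnion₂] at hx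
    obtain ⟨q, hq, hxq⟩ := hx
    rw [hF, Set.Finite.mem_toFinset] at hq
    simp only [Set.mem_setOf_eq] at hq ⊢
    have hsub : x = (fun j => ((q j : ℤ) : ℝ)) + (x - fun j => (q j : ℝ)) := by
      funext j; simp
    calc nrm x ≤ nrm (fun j => ((q j : ℤ) : ℝ)) + nrm (x - fun j => (q j : ℝ)) := by
          conv_lhs => rw [hsub]
          exact hnrm_add _ _
      _ ≤ r + K * ‖x - fun j => (q j : ℝ)‖ := add_le_add hq (hKle _)
      _ ≤ r + K * 1 := by
          gcongr
          exact latticeCube_norm_le hxq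
      _ = r + K := by ring
end cubes

lemma binom_upper {r a : ℝ} (ha : 0 ≤ a) (hr : 1 ≤ r) {n : ℕ} (hn : 1 ≤ n) :
    (r + a) ^ n ≤ r ^ n + ((1 + a) ^ n - 1) * r ^ (n - 1) := by
  have hr0 : (0:ℝ) ≤ r := by linarith
  have h1 : (r + a) ^ n = ∑ k ∈ Finset.range (n + 1), r ^ k * a ^ (n - k) * (n.choose k : ℝ) :=
    add_pow r a n
  have h2 : (1 + a) ^ n = ∑ k ∈ Finset.range (n + 1), a ^ (n - k) * (n.choose k : ℝ) := by
    rw [add_pow]; simp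
  rw [h1, Finset.sum_range_succ]
  have hlast : r ^ n * a ^ (n - n) * (n.choose n : ℝ) = r ^ n := by simp
  rw [hlast]
  have hsum : ∑ k ∈ Finset.range n, r ^ k * a ^ (n - k) * (n.choose k : ℝ)
      ≤ ((1 + a) ^ n - 1) * r ^ (n - 1) := by
    have e2 : ((1 + a) ^ n - 1) = ∑ k ∈ Finset.range n, a ^ (n - k) * (n.choose k : ℝ) := by
      rw [h2, Finset.sum_range_succ]; simp
    rw [e2, Finset.sum_mul]
    refine Finset.sum_le_sum fun k hk => ?_
    rw [Finset.mem_range] at hk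
    have hk' : k ≤ n - 1 := by omega
    have : r ^ k ≤ r ^ (n - 1) := pow_le_pow_right₀ hr hk'
    have hpos : (0:ℝ) ≤ a ^ (n - k) * (n.choose k : ℝ) := by positivity
    calc r ^ k * a ^ (n - k) * (n.choose k : ℝ)
        = r ^ k * (a ^ (n - k) * (n.choose k : ℝ)) := by ring
      _ ≤ r ^ (n - 1) * (a ^ (n - k) * (n.choose k : ℝ)) :=
          mul_le_mul_of_nonneg_right this hpos
      _ = a ^ (n - k) * (n.choose k : ℝ) * r ^ (n - 1) := by ring
  linarith

section vol
variable {n : ℕ} {nrm : (Fin n → ℝ) → ℝ}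

lemma vol_scale (hnrm_smul : ∀ (c : ℝ) x, nrm (c • x) = |c| * nrm x)
    {r : ℝ} (hr : 0 < r) :
    volume {z : Fin n → ℝ | nrm z ≤ r} =
      ENNReal.ofReal (r ^ n) * volume {z : Fin n → ℝ | nrm z ≤ 1} := by
  have hset : {z : Fin n → ℝ | nrm z ≤ r} = r • {z : Fin n → ℝ | nrm z ≤ 1} := by
    ext z
    rw [Set.mem_smul_set_iff_inv_smul_mem₀ hr.ne']
    simp only [Set.mem_setOf_eq, hnrm_smul, abs_inv, abs_of_pos hr]
    rw [inv_mul_le_iff₀ hr, mul_one]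
  rw [hset, MeasureTheory.Measure.addHaar_smul_of_nonneg volume hr.le,
    Module.finrank_fin_fun]
end vol

/-- `ω_n = n · λ({z : ‖z‖ ≤ 1})` for a norm `nrm` on `ℝⁿ`. -/
noncomputable def omegaConst (n : ℕ) (nrm : (Fin n → ℝ) → ℝ) : ℝ :=
  n * (volume {z : Fin n → ℝ | nrm z ≤ 1}).toReal

set_option maxHeartbeats 1000000 in
theorem lattice_sum_log_asymptotics (n : ℕ) (hn : 1 ≤ n)
    (nrm : (Fin n → ℝ) → ℝ)
    (hnrm0 : ∀ x, nrm x = 0 ↔ x = 0)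
    (hnrm_smul : ∀ (c : ℝ) x, nrm (c • x) = |c| * nrm x)
    (hnrm_add : ∀ x y, nrm (x + y) ≤ nrm x + nrm y) :
    ∃ C > 0, ∀ T : ℝ, 1 ≤ T →
      |(∑' q : Fin n → ℤ,
          if 1 ≤ nrm (fun j => (q j : ℝ)) ∧ nrm (fun j => (q j : ℝ)) < T then
            nrm (fun j => (q j : ℝ)) ^ (-(n : ℝ)) else 0) -
        omegaConst n nrm * Real.log T| ≤ C := by
  classical
  obtain ⟨K, hK, hKle⟩ := nrm_le_K hnrm_smul hnrm_add
  have hnn := nrm_nonneg' hnrm_smul hnrm_add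
  have hcont := nrm_lipschitz hnrm_smul hnrm_add hKle
  obtain ⟨m, hm, hmle⟩ := nrm_ge_m hn hnrm0 hnrm_smul hnn hcont
  have hfin : ∀ r : ℝ, {q : Fin n → ℤ | nrm (fun j => (q j : ℝ)) ≤ r}.Finite :=
    lattice_finite hm hmle
  set ν : (Fin n → ℤ) → ℝ := fun q => nrm (fun j => (q j : ℝ)) with hν
  set B₁ : Set (Fin n → ℝ) := {z | nrm z ≤ 1} with hB₁
  -- volume of unit ball : finite and positive
  have hB₁top : volume B₁ ≠ ⊤ := by
    have hsub : B₁ ⊆ Metric.closedBall 0 m⁻¹ := by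
      intro z hz
      rw [Metric.mem_closedBall, dist_zero_right]
      have h1 : m * ‖z‖ ≤ 1 := le_trans (hmle z) hz
      rw [← one_div, le_div_iff₀ hm]
      linarith
    exact ne_top_of_le_ne_top (measure_closedBall_lt_top).ne (measure_mono hsub)
  have hB₁pos : 0 < volume B₁ := by
    have hsub : Metric.closedBall 0 K⁻¹ ⊆ B₁ := by
      intro z hz
      rw [Metric.mem_closedBall, dist_zero_right] at hz
      have := hKle z
      have h2 : K * ‖z‖ ≤ K * K⁻¹ := mul_le_mul_of_nonneg_left hz hK.le
      rw [mul_inv_cancel₀ hK.ne'] at h2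
      exact le_trans this h2
    refine lt_of_lt_of_le ?_ (measure_mono hsub)
    exact Metric.measure_closedBall_pos volume 0 (inv_pos.mpr hK)
  set vB : ℝ := (volume B₁).toReal with hvB
  have hvBpos : 0 < vB := ENNReal.toReal_pos hB₁pos.ne' hB₁top
  -- volume of scaled balls, real version
  have hvol_real : ∀ r : ℝ, 0 < r → (volume {z : Fin n → ℝ | nrm z ≤ r}).toReal = r ^ n * vB := by
    intro r hr
    rw [vol_scale hnrm_smul hr, ENNReal.toReal_mul, ENNReal.toReal_ofReal (by positivity)]
  have hvol_top : ∀ r : ℝ, 0 < r → volume {z : Fin n → ℝ | nrm z ≤ r} ≠ ⊤ := by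
    intro r hr
    rw [vol_scale hnrm_smul hr]
    exact ENNReal.mul_ne_top ENNReal.ofReal_ne_top hB₁top
  -- counting function
  set Nr : ℝ → ℝ := fun r => ((hfin r).toFinset.card : ℝ) with hNr
  have hNr_nonneg : ∀ r, 0 ≤ Nr r := fun r => Nat.cast_nonneg _
  have hcount_up : ∀ r : ℝ, 0 < r + K → Nr r ≤ (r + K) ^ n * vB := by
    intro r hr
    have h := (count_sandwich hnrm_smul hnrm_add hK.le hKle hfin r).2
    have := ENNReal.toReal_mono (hvol_top _ hr) h
    rwa [ENNReal.toReal_natCast, hvol_real _ hr] at this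
  have hcount_lo : ∀ r : ℝ, 0 < r - K → (r - K) ^ n * vB ≤ Nr r := by
    intro r hr
    have h := (count_sandwich hnrm_smul hnrm_add hK.le hKle hfin r).1
    have := ENNReal.toReal_mono (ENNReal.natCast_ne_top _) h
    rwa [ENNReal.toReal_natCast, hvol_real _ hr] at this
  -- the central counting estimate
  set Bc : ℝ := (1 + K) ^ n - 1 with hBc
  have hBc0 : 0 ≤ Bc := by
    have : (1:ℝ) ≤ (1 + K) ^ n := one_le_pow₀ (by linarith)
    simp [hBc]; linarith
  set C₂ : ℝ := vB * Bc + vB * (1 + 2 * K) ^ n with hC₂def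
  have hC₂0 : 0 ≤ C₂ := by positivity
  have hC2 : ∀ r : ℝ, 1 ≤ r → |Nr r - vB * r ^ n| ≤ C₂ * r ^ (n - 1) := by
    intro r hr
    have hr0 : (0:ℝ) < r := by linarith
    have hrpow1 : (1:ℝ) ≤ r ^ (n - 1) := one_le_pow₀ hr
    have hrpow0 : (0:ℝ) ≤ r ^ n := by positivity
    rcases le_or_gt (1 + K) r with hcase | hcase
    · have hup : Nr r ≤ vB * r ^ n + vB * Bc * r ^ (n - 1) := by
        have h1 := hcount_up r (by linarith)
        have h2 : (r + K) ^ n ≤ r ^ n + Bc * r ^ (n - 1) := binom_upper hK.le hr hn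
        nlinarith [hvBpos.le]
      have hlo : vB * r ^ n - vB * Bc * r ^ (n - 1) ≤ Nr r := by
        have h1 := hcount_lo r (by linarith)
        have hr1 : (1:ℝ) ≤ r - K := by linarith
        have h2 : ((r - K) + K) ^ n ≤ (r - K) ^ n + Bc * (r - K) ^ (n - 1) :=
          binom_upper hK.le hr1 hn
        rw [sub_add_cancel] at h2
        have h3 : (r - K) ^ (n - 1) ≤ r ^ (n - 1) :=
          pow_le_pow_left₀ (by linarith) (by linarith) _
        nlinarith [hvBpos.le, mul_le_mul_of_nonneg_left h3 hvBpos.le]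
      have hCb : vB * Bc * r ^ (n - 1) ≤ C₂ * r ^ (n - 1) := by
        have : vB * Bc ≤ C₂ := by
          rw [hC₂def]
          nlinarith [pow_nonneg (by linarith : (0:ℝ) ≤ 1 + 2 * K) n, hvBpos.le]
        nlinarith
      rw [abs_le]
      constructor <;> nlinarith
    · have hmono : (r + K) ^ n ≤ (1 + 2 * K) ^ n :=
        pow_le_pow_left₀ (by linarith) (by linarith) n
      have h1 : Nr r ≤ (1 + 2 * K) ^ n * vB := by
        have := hcount_up r (by linarith)
        nlinarith [hvBpos.le]
      have h2 : vB * r ^ n ≤ vB * (1 + 2 * K) ^ n := by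
        have : r ^ n ≤ (1 + 2 * K) ^ n := pow_le_pow_left₀ (by linarith) (by linarith) n
        nlinarith [hvBpos.le]
      have h3 : 0 ≤ Nr r := hNr_nonneg r
      have h4 : vB * (1 + 2 * K) ^ n ≤ C₂ * r ^ (n - 1) := by
        have h5 : vB * (1 + 2 * K) ^ n ≤ C₂ := by
          rw [hC₂def]; linarith [mul_nonneg hvBpos.le hBc0]
        exact h5.trans (le_mul_of_one_le_right hC₂0 hrpow1)
      have h6 : 0 ≤ vB * r ^ n := by positivity
      rw [abs_le]
      constructor <;> linarith
  -- the constant c₀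
  set F0 : Finset (Fin n → ℤ) := (hfin 1).toFinset.filter (fun q => ν q < 1) with hF0
  set c₀ : ℝ := (F0.card : ℝ) with hc₀
  have hc₀0 : 0 ≤ c₀ := Nat.cast_nonneg _
  set D : ℝ := n * (C₂ + c₀) with hD
  have hD0 : 0 ≤ D := mul_nonneg (Nat.cast_nonneg n) (by linarith)
  have hvBBc : 0 ≤ vB * (1 + Bc) := mul_nonneg hvBpos.le (by linarith)
  refine ⟨D + vB * (1 + Bc) + 1, by linarith, ?_⟩
  intro T hT
  set ω : ℝ := omegaConst n nrm with hω
  have hωvB : ω = n * vB := rfl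
  -- the summation set
  have hA : {q : Fin n → ℤ | 1 ≤ ν q ∧ ν q < T}.Finite :=
    (hfin T).subset (fun q hq => le_of_lt hq.2)
  set s : Finset (Fin n → ℤ) := hA.toFinset with hs
  have hmem_s : ∀ q, q ∈ s ↔ (1 ≤ ν q ∧ ν q < T) := by
    intro q; rw [hs, Set.Finite.mem_toFinset]; rfl
  have hsum_eq : (∑' q : Fin n → ℤ,
      if 1 ≤ nrm (fun j => (q j : ℝ)) ∧ nrm (fun j => (q j : ℝ)) < T then
        nrm (fun j => (q j : ℝ)) ^ (-(n : ℝ)) else 0) = ∑ q ∈ s, ν q ^ (-(n:ℝ)) := by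
    rw [tsum_eq_sum (s := s) (fun q hq => if_neg (fun hc => hq ((hmem_s q).mpr hc)))]
    exact Finset.sum_congr rfl fun q hq => if_pos ((hmem_s q).mp hq)
  rw [hsum_eq]
  -- trivial case T = 1
  rcases eq_or_lt_of_le hT with rfl | hT1
  · have hse : s = ∅ := by
      rw [Finset.eq_empty_iff_forall_notMem]
      intro q hq
      obtain ⟨h1, h2⟩ := (hmem_s q).mp hq
      linarith
    rw [hse]
    simp only [Finset.sum_empty, Real.log_one, mul_zero, sub_zero, abs_zero]
    linarith
  -- Now 1 < T.
  have hn1 : (1:ℝ) ≤ (n:ℝ) := by exact_mod_cast hn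
  have hn0 : (0:ℝ) < n := by linarith
  have hexp : -(n:ℝ) - 1 < -1 := by linarith
  have hT0 : (0:ℝ) < T := by linarith
  set g : (Fin n → ℤ) → ℝ → ℝ :=
    fun q => Set.indicator (Set.Ici (ν q)) (fun r => (n:ℝ) * r ^ (-(n:ℝ) - 1)) with hg
  have hbase : IntegrableOn (fun r : ℝ => (n:ℝ) * r ^ (-(n:ℝ) - 1)) (Set.Ioi 1) :=
    (integrableOn_Ioi_rpow_of_lt hexp one_pos).const_mul _
  have hg_int : ∀ q ∈ s, IntegrableOn (g q) (Set.Ioi 1) := fun q _ =>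
    hbase.indicator measurableSet_Ici
  have hg_val : ∀ q ∈ s, (∫ r in Set.Ioi (1:ℝ), g q r) = ν q ^ (-(n:ℝ)) := by
    intro q hq
    obtain ⟨hq1, hq2⟩ := (hmem_s q).mp hq
    have hνpos : (0:ℝ) < ν q := lt_of_lt_of_le one_pos hq1
    rw [hg]
    simp only
    rw [MeasureTheory.integral_indicator measurableSet_Ici,
      Measure.restrict_restrict measurableSet_Ici]
    have hae : (Set.Ici (ν q) ∩ Set.Ioi 1 : Set ℝ) =ᵐ[volume] Set.Ioi (ν q) := by
      have h1 : (Set.Ici (ν q) : Set ℝ) =ᵐ[volume] Set.Ioi (ν q) :=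
        (Ioi_ae_eq_Ici (a := ν q)).symm
      have h2 := MeasureTheory.ae_eq_set_inter h1
        (Filter.EventuallyEq.refl _ (Set.Ioi (1:ℝ) : Set ℝ))
      have h3 : (Set.Ioi (ν q) ∩ Set.Ioi 1 : Set ℝ) = Set.Ioi (ν q) := by
        rw [Set.Ioi_inter_Ioi, sup_eq_left.mpr hq1]
      rwa [h3] at h2
    rw [Measure.restrict_congr_set hae, MeasureTheory.integral_const_mul,
      integral_Ioi_rpow_of_lt hexp hνpos]
    have he : -(n:ℝ) - 1 + 1 = -(n:ℝ) := by ring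
    rw [he]
    field_simp
  set Φ : ℝ → ℝ := fun r => ∑ q ∈ s, g q r with hΦ
  have hΦ_int : IntegrableOn Φ (Set.Ioi 1) := integrable_finset_sum s hg_int
  have hS_eq : ∑ q ∈ s, ν q ^ (-(n:ℝ)) = ∫ r in Set.Ioi (1:ℝ), Φ r := by
    rw [hΦ]
    rw [integral_finset_sum s hg_int]
    exact (Finset.sum_congr rfl hg_val).symm
  have hdisj : Disjoint (Set.Ioo (1:ℝ) T) (Set.Ici T) := by
    rw [Set.disjoint_left]; intro r h1 h2; exact absurd h2 (not_le.mpr h1.2)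
  have hunion : Set.Ioo (1:ℝ) T ∪ Set.Ici T = Set.Ioi 1 := Set.Ioo_union_Ici_eq_Ioi hT1
  have hsplit : (∫ r in Set.Ioi (1:ℝ), Φ r) =
      (∫ r in Set.Ioo (1:ℝ) T, Φ r) + ∫ r in Set.Ici T, Φ r := by
    rw [← hunion] at hΦ_int ⊢
    exact MeasureTheory.setIntegral_union hdisj measurableSet_Ici
      (hΦ_int.mono_set Set.subset_union_left)
      (hΦ_int.mono_set Set.subset_union_right)
  -- tail estimate
  have hcard_le : (s.card : ℝ) ≤ Nr T := by
    have hsub : s ⊆ (hfin T).toFinset := by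
      intro q hq; rw [Set.Finite.mem_toFinset]; exact le_of_lt ((hmem_s q).mp hq).2
    have h := Finset.card_le_card hsub
    simp only [hNr]
    exact_mod_cast h
  have htail_eq : (∫ r in Set.Ici T, Φ r) = (s.card : ℝ) * T ^ (-(n:ℝ)) := by
    have hcongr : Set.EqOn Φ (fun r => (s.card : ℝ) * ((n:ℝ) * r ^ (-(n:ℝ) - 1)))
        (Set.Ici T) := by
      intro r hr
      have hr' : T ≤ r := hr
      have h1 : Φ r = ∑ q ∈ s, g q r := by rw [hΦ]
      rw [h1]
      calc (∑ q ∈ s, g q r) = ∑ q ∈ s, (n:ℝ) * r ^ (-(n:ℝ) - 1) := by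
            refine Finset.sum_congr rfl fun q hq => ?_
            have hle : r ∈ Set.Ici (ν q) :=
              le_of_lt (lt_of_lt_of_le ((hmem_s q).mp hq).2 hr')
            rw [hg]
            exact Set.indicator_of_mem hle _
        _ = (s.card : ℝ) * ((n:ℝ) * r ^ (-(n:ℝ) - 1)) := by
            rw [Finset.sum_const, nsmul_eq_mul]
    rw [MeasureTheory.setIntegral_congr_fun measurableSet_Ici hcongr,
      MeasureTheory.integral_const_mul, MeasureTheory.integral_Ici_eq_integral_Ioi,
      MeasureTheory.integral_const_mul, integral_Ioi_rpow_of_lt hexp hT0]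
    have he : -(n:ℝ) - 1 + 1 = -(n:ℝ) := by ring
    rw [he]
    field_simp
  have htail_nonneg : 0 ≤ ∫ r in Set.Ici T, Φ r := by
    rw [htail_eq]; positivity
  have htail_le : (∫ r in Set.Ici T, Φ r) ≤ vB * (1 + Bc) := by
    rw [htail_eq]
    have h1 : Nr T ≤ (T + K) ^ n * vB := hcount_up T (by linarith)
    have h2 : (T + K) ^ n ≤ T ^ n + Bc * T ^ (n - 1) := binom_upper hK.le hT hn
    have h3 : T ^ (n - 1) ≤ T ^ n := pow_le_pow_right₀ hT (by omega)
    have h4 : Nr T ≤ (1 + Bc) * T ^ n * vB := by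
      nlinarith [mul_le_mul_of_nonneg_right h2 hvBpos.le,
        mul_le_mul_of_nonneg_left h3 (mul_nonneg hBc0 hvBpos.le)]
    have h5 : T ^ (-(n:ℝ)) = ((T:ℝ) ^ (n:ℕ))⁻¹ := by
      rw [Real.rpow_neg hT0.le, Real.rpow_natCast]
    rw [h5]
    have hTn_pos : (0:ℝ) < T ^ n := by positivity
    calc (s.card : ℝ) * ((T:ℝ) ^ (n:ℕ))⁻¹
        ≤ ((1 + Bc) * T ^ n * vB) * ((T:ℝ) ^ (n:ℕ))⁻¹ :=
          mul_le_mul_of_nonneg_right (hcard_le.trans h4) (by positivity)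
      _ = vB * (1 + Bc) := by field_simp
  -- main estimate
  have hlog : (∫ r in Set.Ioo (1:ℝ) T, r⁻¹) = Real.log T := by
    have h1 : (∫ r in (1:ℝ)..T, r⁻¹) = Real.log (T / 1) := by
      apply integral_inv
      rw [Set.uIcc_of_le hT]
      intro hmem
      rw [Set.mem_Icc] at hmem
      linarith [hmem.1]
    rw [intervalIntegral.integral_of_le hT, MeasureTheory.integral_Ioc_eq_integral_Ioo] at h1
    rw [h1, div_one]
  have hinv_int : IntegrableOn (fun r : ℝ => r⁻¹) (Set.Ioo 1 T) := by
    have h1 : IntegrableOn (fun r : ℝ => r⁻¹) (Set.Icc 1 T) := by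
      apply ContinuousOn.integrableOn_Icc
      apply ContinuousOn.inv₀ continuousOn_id
      intro x hx; exact ne_of_gt (lt_of_lt_of_le one_pos hx.1)
    exact h1.mono_set Set.Ioo_subset_Icc_self
  have hΦIoo : IntegrableOn Φ (Set.Ioo 1 T) := hΦ_int.mono_set (fun r hr => hr.1)
  have hpt : ∀ r ∈ Set.Ioo (1:ℝ) T, |Φ r - ω * r⁻¹| ≤ D * r ^ (-2:ℝ) := by
    intro r hr
    obtain ⟨hr1, hrT⟩ := hr
    have hr0 : (0:ℝ) < r := by linarith
    have hF0sub : F0 ⊆ (hfin r).toFinset := by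
      intro q hq
      rw [hF0, Finset.mem_filter] at hq
      rw [Set.Finite.mem_toFinset]
      exact le_of_lt (lt_of_lt_of_le hq.2 hr1.le)
    have hfilter : s.filter (fun q => ν q ≤ r) = (hfin r).toFinset \ F0 := by
      ext q
      simp only [Finset.mem_filter, Finset.mem_sdiff, Set.Finite.mem_toFinset,
        Set.mem_setOf_eq, hF0]
      constructor
      · rintro ⟨hqs, hqr⟩
        obtain ⟨h1, _⟩ := (hmem_s q).mp hqs
        exact ⟨hqr, fun hcon => absurd hcon.2 (not_lt.mpr h1)⟩
      · rintro ⟨hqr, hq0⟩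
        have h1 : 1 ≤ ν q := by
          by_contra hcon
          push_neg at hcon
          exact hq0 ⟨le_of_lt hcon, hcon⟩
        exact ⟨(hmem_s q).mpr ⟨h1, lt_of_le_of_lt hqr hrT⟩, hqr⟩
    have hcard : (((s.filter (fun q => ν q ≤ r)).card : ℕ) : ℝ) = Nr r - c₀ := by
      rw [hfilter, Finset.card_sdiff_of_subset hF0sub, hNr, hc₀]
      have hle := Finset.card_le_card hF0sub
      rw [Nat.cast_sub hle]
    have hΦr : Φ r = (Nr r - c₀) * ((n:ℝ) * r ^ (-(n:ℝ) - 1)) := by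
      rw [hΦ]
      calc (∑ q ∈ s, g q r)
          = ∑ q ∈ s, (if ν q ≤ r then (n:ℝ) * r ^ (-(n:ℝ) - 1) else 0) := by
            refine Finset.sum_congr rfl fun q _ => ?_
            rw [hg]
            simp only [Set.indicator_apply, Set.mem_Ici]
        _ = ∑ q ∈ s.filter (fun q => ν q ≤ r), (n:ℝ) * r ^ (-(n:ℝ) - 1) :=
            (Finset.sum_filter _ _).symm
        _ = (((s.filter (fun q => ν q ≤ r)).card : ℕ) : ℝ) * ((n:ℝ) * r ^ (-(n:ℝ) - 1)) := by
            rw [Finset.sum_const, nsmul_eq_mul]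
        _ = (Nr r - c₀) * ((n:ℝ) * r ^ (-(n:ℝ) - 1)) := by rw [hcard]
    have hωr : ω * r⁻¹ = (vB * r ^ n) * ((n:ℝ) * r ^ (-(n:ℝ) - 1)) := by
      rw [hωvB]
      have h1 : (r:ℝ) ^ (n:ℕ) * r ^ (-(n:ℝ) - 1) = r⁻¹ := by
        rw [← Real.rpow_natCast r n, ← Real.rpow_add hr0]
        have he : (n:ℝ) + (-(n:ℝ) - 1) = -1 := by ring
        rw [he, Real.rpow_neg_one]
      have h2 : (vB * r ^ n) * ((n:ℝ) * r ^ (-(n:ℝ) - 1))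
          = vB * (n:ℝ) * ((r:ℝ) ^ (n:ℕ) * r ^ (-(n:ℝ) - 1)) := by ring
      rw [h2, h1]; ring
    rw [hΦr, hωr, ← sub_mul, abs_mul]
    have habs2 : |(n:ℝ) * r ^ (-(n:ℝ) - 1)| = (n:ℝ) * r ^ (-(n:ℝ) - 1) := by
      apply abs_of_nonneg
      have : (0:ℝ) ≤ r ^ (-(n:ℝ) - 1) := Real.rpow_nonneg hr0.le _
      positivity
    rw [habs2]
    have hbound : |Nr r - c₀ - vB * r ^ n| ≤ (C₂ + c₀) * r ^ (n - 1) := by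
      have h1 := hC2 r hr1.le
      have h2 : (1:ℝ) ≤ r ^ (n - 1) := one_le_pow₀ hr1.le
      have h3 : c₀ ≤ c₀ * r ^ (n - 1) := le_mul_of_one_le_right hc₀0 h2
      rw [abs_le] at h1 ⊢
      constructor <;> linarith [h1.1, h1.2]
    calc |Nr r - c₀ - vB * r ^ n| * ((n:ℝ) * r ^ (-(n:ℝ) - 1))
        ≤ ((C₂ + c₀) * r ^ (n - 1)) * ((n:ℝ) * r ^ (-(n:ℝ) - 1)) := by
          apply mul_le_mul_of_nonneg_right hbound
          have : (0:ℝ) ≤ r ^ (-(n:ℝ) - 1) := Real.rpow_nonneg hr0.le _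
          positivity
      _ = D * (r ^ (n - 1) * r ^ (-(n:ℝ) - 1)) := by rw [hD]; ring
      _ = D * r ^ (-2:ℝ) := by
          congr 1
          rw [← Real.rpow_natCast r (n - 1), ← Real.rpow_add hr0]
          congr 1
          have hc : ((n - 1 : ℕ) : ℝ) = (n:ℝ) - 1 := by
            rw [Nat.cast_sub hn]; norm_num
          rw [hc]; ring
  have hDint : IntegrableOn (fun r : ℝ => D * r ^ (-2:ℝ)) (Set.Ioi 1) :=
    (integrableOn_Ioi_rpow_of_lt (by norm_num) one_pos).const_mul D
  have hmain : |(∫ r in Set.Ioo (1:ℝ) T, Φ r) - ω * Real.log T| ≤ D := by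
    have hsub : (∫ r in Set.Ioo (1:ℝ) T, Φ r) - ω * Real.log T
        = ∫ r in Set.Ioo (1:ℝ) T, (Φ r - ω * r⁻¹) := by
      rw [MeasureTheory.integral_sub hΦIoo (hinv_int.const_mul ω),
        MeasureTheory.integral_const_mul, hlog]
    rw [hsub]
    have h1 : |∫ r in Set.Ioo (1:ℝ) T, (Φ r - ω * r⁻¹)|
        ≤ ∫ r in Set.Ioo (1:ℝ) T, D * r ^ (-2:ℝ) := by
      rw [← Real.norm_eq_abs]
      apply MeasureTheory.norm_integral_le_of_norm_le (hDint.mono_set (fun r hr => hr.1))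
      filter_upwards [ae_restrict_mem measurableSet_Ioo] with r hr
      rw [Real.norm_eq_abs]; exact hpt r hr
    have h2 : (∫ r in Set.Ioo (1:ℝ) T, D * r ^ (-2:ℝ))
        ≤ ∫ r in Set.Ioi (1:ℝ), D * r ^ (-2:ℝ) := by
      apply MeasureTheory.setIntegral_mono_set hDint
      · filter_upwards [ae_restrict_mem measurableSet_Ioi] with r hr
        have hr0 : (0:ℝ) < r := lt_trans one_pos hr
        have : (0:ℝ) ≤ r ^ (-2:ℝ) := Real.rpow_nonneg hr0.le _
        positivity
      · exact HasSubset.Subset.eventuallyLE (fun r hr => hr.1)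
    have h3 : (∫ r in Set.Ioi (1:ℝ), D * r ^ (-2:ℝ)) = D := by
      rw [MeasureTheory.integral_const_mul, integral_Ioi_rpow_of_lt (by norm_num) one_pos]
      norm_num
    linarith
  rw [hS_eq, hsplit]
  have hfinal : |((∫ r in Set.Ioo (1:ℝ) T, Φ r) + ∫ r in Set.Ici T, Φ r) - ω * Real.log T|
      ≤ D + vB * (1 + Bc) := by
    have heq : ((∫ r in Set.Ioo (1:ℝ) T, Φ r) + ∫ r in Set.Ici T, Φ r) - ω * Real.log T
        = ((∫ r in Set.Ioo (1:ℝ) T, Φ r) - ω * Real.log T) + ∫ r in Set.Ici T, Φ r := by ring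
    rw [heq]
    calc |((∫ r in Set.Ioo (1:ℝ) T, Φ r) - ω * Real.log T) + ∫ r in Set.Ici T, Φ r|
        ≤ |(∫ r in Set.Ioo (1:ℝ) T, Φ r) - ω * Real.log T| + |∫ r in Set.Ici T, Φ r| :=
          abs_add_le _ _
      _ ≤ D + vB * (1 + Bc) := by
          refine add_le_add hmain ?_
          rw [abs_of_nonneg htail_nonneg]; exact htail_le
  linarith
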